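/- Suppose V : [0, ∞) → ℝ is differentiable and nonnegative, a > 0, r ≥ 0, and V'(t) ≤ −a V(t) whenever V(t) ≥ r. Then for all t ≥ 0, V(t) ≤ max(V(0), r). -/
import Mathlib


theorem iss_ultimate_bound (V : ℝ → ℝ) (a r : ℝ) (ha : 0 < a) (hr : 0 ≤ r)
    (hV : Differentiable ℝ V) (hVnn : ∀ t, 0 ≤ t → 0 ≤ V t)
    (hdecay : ∀ t, 0 ≤ t → r ≤ V t → deriv V t ≤ -a * V t) :
    ∀ t, 0 ≤ t → V t ≤ max (V 0) r := by
  intro t ht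
  by_contra hcon
  push_neg at hcon
  set M := max (V 0) r with hM
  -- set of times in [0,t] where V ≤ M
  set S : Set ℝ := Set.Icc 0 t ∩ V ⁻¹' Set.Iic M with hS
  have hSclosed : IsClosed S := isClosed_Icc.inter (IsClosed.preimage hV.continuous isClosed_Iic)
  have hSne : S.Nonempty := ⟨0, ⟨le_refl 0, ht⟩, show V 0 ≤ M from le_max_left _ _⟩
  have hSbdd : BddAbove S := ⟨t, fun x hx => hx.1.2⟩
  set t₀ := sSup S with ht₀
  have ht₀S : t₀ ∈ S := (isCompact_Icc.inter_right (IsClosed.preimage hV.continuous isClosed_Iic)).sSup_mem hSne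
  have ht₀0 : 0 ≤ t₀ := ht₀S.1.1
  have ht₀t : t₀ ≤ t := ht₀S.1.2
  have hgt : ∀ s, t₀ < s → s ≤ t → M < V s := by
    intro s hs hst
    by_contra h
    push_neg at h
    exact absurd (le_csSup hSbdd ⟨⟨le_trans ht₀0 hs.le, hst⟩, h⟩) (not_le.mpr hs)
  -- V is antitone on [t₀, t]
  have hanti : AntitoneOn V (Set.Icc t₀ t) := by
    apply antitoneOn_of_deriv_nonpos (convex_Icc _ _) hV.continuous.continuousOn
      (fun s _ => (hV s).differentiableWithinAt)
    intro s hs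
    rw [interior_Icc] at hs
    have hs0 : 0 ≤ s := le_trans ht₀0 hs.1.le
    have hVs : M < V s := hgt s hs.1 hs.2.le
    have hrV : r ≤ V s := le_trans (le_max_right _ _) hVs.le
    calc deriv V s ≤ -a * V s := hdecay s hs0 hrV
      _ ≤ 0 := mul_nonpos_of_nonpos_of_nonneg (neg_nonpos.mpr ha.le) (hVnn s hs0)
  have h1 : V t ≤ V t₀ := hanti ⟨le_refl _, ht₀t⟩ ⟨ht₀t, le_refl _⟩ ht₀t
  exact absurd (le_trans h1 ht₀S.2) (not_le.mpr hcon)
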